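/- Fix n ≥ 1, κ ≥ 1, and let θ ∈ Equiv.Perm (Fin n × Fin κ) be a block permutation with θ (i,a) = (π i, d (π i) a) for π ∈ Equiv.Perm (Fin n) and d : Fin n → Equiv.Perm (Fin κ). Let T^θ be the real permutation matrix, with rows and columns indexed by strategy profiles Fin n → Fin κ, whose (y,x) entry is 1 if y = (fun j => d j (x (π⁻¹ j))) and 0 otherwise (equivalently T^θ = (D_1 ⊗ ⋯ ⊗ D_n) · T_π, where D_j is the κ×κ permutation matrix of d j and T_π is the profile permutation matrix of π). Then: (1) the map φⁿ(θ) := P_π ⊗ T^θ is a linear representation of the group of block permutations, i.e. φⁿ(θ ∘ θ') = φⁿ(θ) · φⁿ(θ') and each φⁿ(θ) is invertible; (2) for a finite game c : Fin n → ((Fin n → Fin κ) → ℝ), θ is a strategy symmetry of c if and only if V_G · (P_π ⊗ T^θ) = V_G. -/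

import Mathlib

open Matrix Kronecker

/-- The `n×n` permutation matrix of `π`: `(i,j)` entry is `1` if `i = π j`. -/
def permMat (n : ℕ) (π : Equiv.Perm (Fin n)) : Matrix (Fin n) (Fin n) ℝ :=
  Matrix.of fun i j => if i = π j then 1 else 0

/-- The matrix `T^θ` of a block permutation with data `(π, d)`: the `(y,x)`
entry is `1` if `y = (fun j => d j (x (π⁻¹ j)))` and `0` otherwise. -/
def blockProfMat (n κ : ℕ) (π : Equiv.Perm (Fin n))
    (d : Fin n → Equiv.Perm (Fin κ)) :
    Matrix (Fin n → Fin κ) (Fin n → Fin κ) ℝ :=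
  Matrix.of fun y x => if y = fun j => d j (x (π⁻¹ j)) then 1 else 0

/-- `φⁿ(θ) := P_π ⊗ T^θ` for a block permutation `θ` with data `(π, d)`. -/
def phiN (n κ : ℕ) (π : Equiv.Perm (Fin n)) (d : Fin n → Equiv.Perm (Fin κ)) :
    Matrix (Fin n × (Fin n → Fin κ)) (Fin n × (Fin n → Fin κ)) ℝ :=
  permMat n π ⊗ₖ blockProfMat n κ π d

/-! `P_π` and `T^θ` are the permutation matrices of `π⁻¹` on players and of the inverse of the
profile action `x ↦ (j ↦ d j (x (π⁻¹ j)))`, so `φⁿ(θ)` is the permutation matrix of the product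
action on pairs (player, profile). Block data compose as in a wreath product,
`(π, d) (π', d') = (π π', j ↦ d j * d' (π⁻¹ j))`, and so do the profile actions; since
`σ ↦ (σ⁻¹).permMatrix` is multiplicative and `⊗ₖ` is compatible with products, (1) follows.
Multiplying a row vector by a permutation matrix only reindexes it: the entry of `V_G φⁿ(θ)` at
`(i, x)` is `c (π i) (θ · x)`, which is (2). -/

open Equiv

section

variable {ι α : Type*}

def profileAction (π : Perm ι) (d : ι → Perm α) : Perm (ι → α) where
  toFun x j := d j (x (π⁻¹ j))
  invFun y i := (d (π i))⁻¹ (y (π i))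
  left_inv x := by ext i; simp
  right_inv y := by ext j; simp

@[simp]
theorem profileAction_apply (π : Perm ι) (d : ι → Perm α) (x : ι → α) (j : ι) :
    profileAction π d x j = d j (x (π⁻¹ j)) := rfl

theorem profileAction_mul (π π' : Perm ι) (d d' : ι → Perm α) :
    profileAction π d * profileAction π' d' =
      profileAction (π * π') (fun j => d j * d' (π⁻¹ j)) := by
  ext x j
  simp [_root_.mul_inv_rev]

def IsBlockPerm (θ : Perm (ι × α)) (π : Perm ι) (d : ι → Perm α) : Prop :=
  ∀ i a, θ (i, a) = (π i, d (π i) a)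

theorem IsBlockPerm.mul {θ θ' : Perm (ι × α)} {π π' : Perm ι} {d d' : ι → Perm α}
    (h : IsBlockPerm θ π d) (h' : IsBlockPerm θ' π' d') :
    IsBlockPerm (θ * θ') (π * π') (fun j => d j * d' (π⁻¹ j)) := by
  intro i a
  simp [h' i a, h (π' i)]

theorem IsBlockPerm.unique [Nonempty α] {θ : Perm (ι × α)} {π π' : Perm ι} {d d' : ι → Perm α}
    (h : IsBlockPerm θ π d) (h' : IsBlockPerm θ π' d') : π = π' ∧ d = d' := by
  have hπ : π = π' := Equiv.ext fun i =>
    congrArg Prod.fst ((h i (Classical.arbitrary α)).symm.trans (h' i _))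
  subst hπ
  refine ⟨rfl, funext fun j => Equiv.ext fun a => ?_⟩
  simpa using congrArg Prod.snd ((h (π⁻¹ j) a).symm.trans (h' (π⁻¹ j) a))

end

theorem Matrix.permMatrix_kronecker_permMatrix {m n R : Type*} [DecidableEq m] [DecidableEq n]
    [MulZeroOneClass R] (σ : Perm m) (τ : Perm n) :
    σ.permMatrix R ⊗ₖ τ.permMatrix R = Perm.permMatrix R (σ.prodCongr τ) := by
  ext ⟨i, j⟩ ⟨k, l⟩
  simp [PEquiv.toMatrix_apply, ← ite_and, and_comm]

theorem Matrix.isUnit_permMatrix {n R : Type*} [Fintype n] [DecidableEq n] [Semiring R]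
    (σ : Perm n) : IsUnit (σ.permMatrix R) := by
  simpa using (Group.isUnit σ⁻¹).map (permMatrixHom (n := n) (R := R))

theorem permMat_eq_permMatrix (n : ℕ) (π : Perm (Fin n)) : permMat n π = π⁻¹.permMatrix ℝ := by
  ext i j
  simp [permMat, PEquiv.toMatrix_apply, Equiv.eq_symm_apply, eq_comm]

theorem blockProfMat_eq_permMatrix (n κ : ℕ) (π : Perm (Fin n)) (d : Fin n → Perm (Fin κ)) :
    blockProfMat n κ π d = (profileAction π d)⁻¹.permMatrix ℝ := by
  ext y x
  simp only [blockProfMat, of_apply, PEquiv.toMatrix_apply, toPEquiv_apply, Option.mem_def,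
    Option.some_inj, Perm.inv_def]
  exact if_congr (Equiv.symm_apply_eq (profileAction π d)).symm rfl rfl

theorem phiN_eq_kronecker (n κ : ℕ) (π : Perm (Fin n)) (d : Fin n → Perm (Fin κ)) :
    phiN n κ π d = π⁻¹.permMatrix ℝ ⊗ₖ (profileAction π d)⁻¹.permMatrix ℝ := by
  rw [phiN, permMat_eq_permMatrix, blockProfMat_eq_permMatrix]

theorem phiN_mul (n κ : ℕ) (π π' : Perm (Fin n)) (d d' : Fin n → Perm (Fin κ)) :
    phiN n κ π d * phiN n κ π' d' = phiN n κ (π * π') (fun j => d j * d' (π⁻¹ j)) := by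
  simp only [phiN_eq_kronecker, ← mul_kronecker_mul, ← permMatrix_mul, ← _root_.mul_inv_rev,
    profileAction_mul]

theorem isUnit_phiN (n κ : ℕ) (π : Perm (Fin n)) (d : Fin n → Perm (Fin κ)) :
    IsUnit (phiN n κ π d) := by
  rw [phiN_eq_kronecker]
  exact IsUnit.kronecker (isUnit_permMatrix _) (isUnit_permMatrix _)

theorem vecMul_phiN_apply (n κ : ℕ) (π : Perm (Fin n)) (d : Fin n → Perm (Fin κ))
    (v : Fin n × (Fin n → Fin κ) → ℝ) (i : Fin n) (x : Fin n → Fin κ) :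
    (v ᵥ* phiN n κ π d) (i, x) = v (π i, profileAction π d x) := by
  rw [phiN_eq_kronecker, permMatrix_kronecker_permMatrix, vecMul_permMatrix]
  rfl

theorem stmt10_general (n κ : ℕ) (hκ : 1 ≤ κ)
    (θ : Equiv.Perm (Fin n × Fin κ)) (π : Equiv.Perm (Fin n))
    (d : Fin n → Equiv.Perm (Fin κ))
    (hθ : ∀ (i : Fin n) (a : Fin κ), θ (i, a) = (π i, d (π i) a)) :
    ((∀ (θ' : Equiv.Perm (Fin n × Fin κ)) (π' π'' : Equiv.Perm (Fin n))
        (d' d'' : Fin n → Equiv.Perm (Fin κ)),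
        (∀ (i : Fin n) (a : Fin κ), θ' (i, a) = (π' i, d' (π' i) a)) →
        (∀ (i : Fin n) (a : Fin κ), (θ * θ') (i, a) = (π'' i, d'' (π'' i) a)) →
        phiN n κ π'' d'' = phiN n κ π d * phiN n κ π' d') ∧
      IsUnit (phiN n κ π d)) ∧
    (∀ c : Fin n → (Fin n → Fin κ) → ℝ,
      (∀ (i : Fin n) (x : Fin n → Fin κ),
          c i x = c (π i) fun j => d j (x (π⁻¹ j))) ↔
      Matrix.vecMul (fun p : Fin n × (Fin n → Fin κ) => c p.1 p.2) (phiN n κ π d)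
        = fun p : Fin n × (Fin n → Fin κ) => c p.1 p.2) := by
  have : Nonempty (Fin κ) := Fin.pos_iff_nonempty.mp hκ
  refine ⟨⟨fun θ' π' π'' d' d'' hθ' hθθ' => ?_, isUnit_phiN n κ π d⟩, fun c => ?_⟩
  · obtain ⟨rfl, rfl⟩ := IsBlockPerm.unique hθθ' (IsBlockPerm.mul hθ hθ')
    exact (phiN_mul n κ π π' d d').symm
  · simp only [funext_iff, Prod.forall, vecMul_phiN_apply]
    exact forall₂_congr fun i x => eq_comm

/-- (1) `φⁿ` is a linear representation of the group of block
permutations: `φⁿ(θ ∘ θ') = φⁿ(θ) · φⁿ(θ')` and each `φⁿ(θ)` is invertible;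
(2) a block permutation `θ` with data `(π, d)` is a strategy symmetry of a
game `c` iff `V_G · (P_π ⊗ T^θ) = V_G`. -/
theorem stmt10 (n κ : ℕ) (hn : 1 ≤ n) (hκ : 1 ≤ κ)
    (θ : Equiv.Perm (Fin n × Fin κ)) (π : Equiv.Perm (Fin n))
    (d : Fin n → Equiv.Perm (Fin κ))
    (hθ : ∀ (i : Fin n) (a : Fin κ), θ (i, a) = (π i, d (π i) a)) :
    ((∀ (θ' : Equiv.Perm (Fin n × Fin κ)) (π' π'' : Equiv.Perm (Fin n))
        (d' d'' : Fin n → Equiv.Perm (Fin κ)),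
        (∀ (i : Fin n) (a : Fin κ), θ' (i, a) = (π' i, d' (π' i) a)) →
        (∀ (i : Fin n) (a : Fin κ), (θ * θ') (i, a) = (π'' i, d'' (π'' i) a)) →
        phiN n κ π'' d'' = phiN n κ π d * phiN n κ π' d') ∧
      IsUnit (phiN n κ π d)) ∧
    (∀ c : Fin n → (Fin n → Fin κ) → ℝ,
      (∀ (i : Fin n) (x : Fin n → Fin κ),
          c i x = c (π i) fun j => d j (x (π⁻¹ j))) ↔
      Matrix.vecMul (fun p : Fin n × (Fin n → Fin κ) => c p.1 p.2) (phiN n κ π d)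
        = fun p : Fin n × (Fin n → Fin κ) => c p.1 p.2) :=
  stmt10_general n κ hκ θ π d hθ
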